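/- Let Λ ⊂ ℂ be a lattice with ℤ-basis (ω₁, ω₂), Im(ω₁/ω₂) > 0, quasi-periods η₁ = η_Λ(ω₁), η₂ = η_Λ(ω₂), and covolume vol_Λ = Im(ω₁·conj(ω₂)). Let Q_Λ : ℂ → ℝ be the unique ℝ-quadratic form with Q_Λ(ω) = Re(ω·η_Λ(ω)) for all ω ∈ Λ, and write Q_Λ(z) = (C/2)z² + (C̄/2)z̄² + D·z·z̄ with C ∈ ℂ, D ∈ ℝ. Then D = π/vol_Λ and C = (η₁·conj(ω₂) − η₂·conj(ω₁))/(2i·vol_Λ). -/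

import Mathlib

/-!
The ℝ-linear extension of `η_Λ` can be written `η(z) = α z + β z̄`. Solving for `α, β` from
`η(ω₁) = η₁`, `η(ω₂) = η₂` by Cramer's rule (the determinant is
`ω₁ω̄₂ − ω₂ω̄₁ = 2i·vol_Λ`) gives the claimed `α`, and `β = (ω₁η₂ − ω₂η₁)/(2i·vol_Λ) = π/vol_Λ`
by the Legendre relation; in particular `β` is real. Hence
`Re(z·η(z)) = (α/2)z² + (ᾱ/2)z̄² + β z z̄`, and since a binary quadratic form is determined by
its values at `ω₁`, `ω₂`, `ω₁ + ω₂`, comparing with `Q_Λ` on these three lattice points gives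
`C = α` and `D = β`.
-/

open Complex ComplexConjugate

open Matrix in
theorem binary_quadratic_coeffs_eq_zero {R : Type*} [CommRing R] [IsDomain R]
    {a b c x₁ y₁ x₂ y₂ : R} (hdet : x₁ * y₂ - x₂ * y₁ ≠ 0)
    (h₁ : x₁ ^ 2 * a + y₁ ^ 2 * b + x₁ * y₁ * c = 0)
    (h₂ : x₂ ^ 2 * a + y₂ ^ 2 * b + x₂ * y₂ * c = 0)
    (h₃ : (x₁ + x₂) ^ 2 * a + (y₁ + y₂) ^ 2 * b + (x₁ + x₂) * (y₁ + y₂) * c = 0) :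
    a = 0 ∧ b = 0 ∧ c = 0 := by
  let M : Matrix (Fin 3) (Fin 3) R :=
    !![x₁ ^ 2, y₁ ^ 2, x₁ * y₁; x₂ ^ 2, y₂ ^ 2, x₂ * y₂;
      (x₁ + x₂) ^ 2, (y₁ + y₂) ^ 2, (x₁ + x₂) * (y₁ + y₂)]
  -- `M` is the symmetric square of `!![x₁, y₁; x₂, y₂]` up to elementary operations
  have hM : M.det = (x₁ * y₂ - x₂ * y₁) ^ 3 := by
    simp only [M, det_fin_three, of_apply, cons_val', cons_val_zero, cons_val_fin_one,
      cons_val_one, cons_val]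
    ring
  have hv : M *ᵥ ![a, b, c] = 0 := by
    ext i; fin_cases i <;> simpa [M, mulVec, dotProduct, Fin.sum_univ_three]
  have hv0 := eq_zero_of_mulVec_eq_zero (hM ▸ pow_ne_zero 3 hdet) hv
  exact ⟨congrFun hv0 0, congrFun hv0 1, congrFun hv0 2⟩

namespace Complex

noncomputable def realQuadForm (C : ℂ) (D : ℝ) (z : ℂ) : ℂ :=
  C / 2 * z ^ 2 + conj C / 2 * conj z ^ 2 + D * z * conj z

theorem realQuadForm_coeffs_eq_of_eq {C C' : ℂ} {D D' : ℝ} {ω₁ ω₂ : ℂ}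
    (hω : ω₁ * conj ω₂ - ω₂ * conj ω₁ ≠ 0)
    (h₁ : realQuadForm C D ω₁ = realQuadForm C' D' ω₁)
    (h₂ : realQuadForm C D ω₂ = realQuadForm C' D' ω₂)
    (h₃ : realQuadForm C D (ω₁ + ω₂) = realQuadForm C' D' (ω₁ + ω₂)) :
    C = C' ∧ D = D' := by
  unfold realQuadForm at h₁ h₂ h₃
  rw [map_add] at h₃
  obtain ⟨hC, -, hD⟩ := binary_quadratic_coeffs_eq_zero (a := (C - C') / 2)
    (b := conj (C - C') / 2) (c := ((D - D' : ℝ) : ℂ)) hω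
    (by push_cast [map_sub]; linear_combination h₁)
    (by push_cast [map_sub]; linear_combination h₂)
    (by push_cast [map_sub]; linear_combination h₃)
  exact ⟨by linear_combination 2 * hC, sub_eq_zero.mp (ofReal_eq_zero.mp hD)⟩

theorem re_mul_linear_conj (α : ℂ) (β : ℝ) (z : ℂ) :
    ((z * (α * z + β * conj z)).re : ℂ) = realQuadForm α β z := by
  rw [re_eq_add_conj, realQuadForm]
  simp only [map_mul, map_add, conj_conj, conj_ofReal]
  ring

theorem mul_conj_sub_mul_conj (z w : ℂ) :
    z * conj w - w * conj z = 2 * (z * conj w).im * I := by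
  have h := sub_conj (z * conj w)
  rw [map_mul, conj_conj] at h
  push_cast at h
  linear_combination h

theorem im_mul_conj (z w : ℂ) : (z * conj w).im = (z / w).im * normSq w := by
  rcases eq_or_ne w 0 with rfl | hw
  · simp
  · rw [← im_mul_ofReal, ← mul_conj, ← mul_assoc, div_mul_cancel₀ z hw]

theorem eq_linear_conj_of_legendre {ω₁ ω₂ η₁ η₂ : ℂ} {v : ℝ} (hv : v ≠ 0)
    (hω : ω₁ * conj ω₂ - ω₂ * conj ω₁ = 2 * v * I)
    (hleg : η₂ * ω₁ - η₁ * ω₂ = 2 * Real.pi * I) :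
    let α := (η₁ * conj ω₂ - η₂ * conj ω₁) / (2 * I * v)
    η₁ = α * ω₁ + (Real.pi / v : ℝ) * conj ω₁ ∧ η₂ = α * ω₂ + (Real.pi / v : ℝ) * conj ω₂ := by
  have hv' : (v : ℂ) ≠ 0 := ofReal_ne_zero.mpr hv
  push_cast
  constructor
  · field_simp
    linear_combination (-η₁) * hω + conj ω₁ * hleg
  · field_simp
    linear_combination (-η₂) * hω + conj ω₂ * hleg

end Complex

/-- The coefficients of the real quadratic form `Q_Λ(z) = (C/2)z² + (C̄/2)z̄² + D z z̄`
interpolating `ω ↦ Re(ω·η_Λ(ω))` on a lattice `Λ = ℤω₁ + ℤω₂` with `Im(ω₁/ω₂) > 0`,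
quasi-periods `η₁, η₂` satisfying the Legendre relation, and covolume
`vol_Λ = Im(ω₁·conj(ω₂))`: one has `D = π/vol_Λ` and
`C = (η₁·conj(ω₂) − η₂·conj(ω₁))/(2i·vol_Λ)`. -/
theorem quadratic_form_coefficients (ω₁ ω₂ η₁ η₂ : ℂ) (him : 0 < (ω₁ / ω₂).im)
    (hleg : η₂ * ω₁ - η₁ * ω₂ = 2 * Real.pi * Complex.I)
    (Q : ℂ → ℝ) (C : ℂ) (D : ℝ)
    (hQform : ∀ z : ℂ, (Q z : ℂ) =
      C / 2 * z ^ 2 + (starRingEnd ℂ) C / 2 * ((starRingEnd ℂ) z) ^ 2 +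
        (D : ℂ) * z * (starRingEnd ℂ) z)
    (hQlat : ∀ m n : ℤ, Q ((m : ℂ) * ω₁ + (n : ℂ) * ω₂) =
      (((m : ℂ) * ω₁ + (n : ℂ) * ω₂) * ((m : ℂ) * η₁ + (n : ℂ) * η₂)).re) :
    D = Real.pi / (ω₁ * (starRingEnd ℂ) ω₂).im ∧
    C = (η₁ * (starRingEnd ℂ) ω₂ - η₂ * (starRingEnd ℂ) ω₁) /
      (2 * Complex.I * ((ω₁ * (starRingEnd ℂ) ω₂).im : ℂ)) := by
  have hω₂ : ω₂ ≠ 0 := by rintro rfl; simp at him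
  have hvol : 0 < (ω₁ * conj ω₂).im := im_mul_conj ω₁ ω₂ ▸ mul_pos him (normSq_pos.mpr hω₂)
  have hω := mul_conj_sub_mul_conj ω₁ ω₂
  set vol := (ω₁ * conj ω₂).im
  obtain ⟨hη₁, hη₂⟩ := eq_linear_conj_of_legendre hvol.ne' hω hleg
  set α := (η₁ * conj ω₂ - η₂ * conj ω₁) / (2 * I * vol)
  have hlat (m n : ℤ) : realQuadForm C D (m * ω₁ + n * ω₂) =
      realQuadForm α (Real.pi / vol) (m * ω₁ + n * ω₂) := by
    have hη : (m * η₁ + n * η₂ : ℂ) =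
        α * (m * ω₁ + n * ω₂) + (Real.pi / vol : ℝ) * conj (m * ω₁ + n * ω₂) := by
      rw [map_add, map_mul, map_mul, map_intCast, map_intCast]
      linear_combination m * hη₁ + n * hη₂
    rw [realQuadForm, ← hQform, hQlat, hη, re_mul_linear_conj]
  obtain ⟨hC, hD⟩ := realQuadForm_coeffs_eq_of_eq
    (hω ▸ mul_ne_zero (mul_ne_zero two_ne_zero (ofReal_ne_zero.mpr hvol.ne')) I_ne_zero)
    (by simpa using hlat 1 0) (by simpa using hlat 0 1) (by simpa using hlat 1 1)
  exact ⟨hD, hC⟩
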